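/- Let q be a prime power, F = 𝔽_q, s ≥ 1, and n_1, …, n_s ≥ 1. Call a matrix A ∈ M_{r×r}(F) a unit lower triangular Toeplitz matrix if there exists c : {0,…,r−1} → F with c(0) ≠ 0 such that A_{a,b} = c(a−b) for a ≥ b and A_{a,b} = 0 for a < b. For v = (v_1, …, v_s) ∈ ∏_{i=1}^s F^{n_i}, let wt_blk(v) := #{ i : v_i ≠ 0 } and let wt_H(v) be its Hamming weight as a vector of length M = n_1 + ⋯ + n_s. Then for every linear subspace W ⊆ ∏_{i=1}^s F^{n_i} containing a nonzero vector, there exist unit lower triangular Toeplitz matrices S_i ∈ M_{n_i×n_i}(F), i = 1,…,s, such that the subspace W' := { (v_1 S_1, …, v_s S_s) : (v_1,…,v_s) ∈ W } (each v_i regarded as a row vector) satisfies: the minimum Hamming weight over nonzero elements of W' equals the minimum block weight d_blk(W) over nonzero elements of W. -/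

import Mathlib

/-- Block weight of `v ∈ ∏_i F^{n_i}`: the number of blocks `i` with `v i ≠ 0`. -/
noncomputable def wtBlk {F : Type*} [Field F] {s : ℕ} {n : Fin s → ℕ}
    (v : ∀ i, Fin (n i) → F) : ℕ :=
  Nat.card {i : Fin s // v i ≠ 0}

/-- Hamming weight of `v ∈ ∏_i F^{n_i}` viewed as a vector of length `M = Σ n_i`:
the total number of nonzero scalar coordinates. -/
noncomputable def wtHam {F : Type*} [Field F] {s : ℕ} {n : Fin s → ℕ}
    (v : ∀ i, Fin (n i) → F) : ℕ :=
  ∑ i : Fin s, Nat.card {j : Fin (n i) // v i j ≠ 0}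

/-- A matrix `A ∈ M_{r×r}(F)` is a unit lower triangular Toeplitz matrix if there is
`c` with `c 0 ≠ 0` such that `A a b = c (a−b)` for `a ≥ b` and `A a b = 0` for `a < b`. -/
def IsUnitLTToeplitz {F : Type*} [Field F] {r : ℕ}
    (A : Matrix (Fin r) (Fin r) F) : Prop :=
  ∃ c : ℕ → F, c 0 ≠ 0 ∧
    ∀ a b : Fin r, A a b = if (b : ℕ) ≤ (a : ℕ) then c ((a : ℕ) - (b : ℕ)) else 0

/-! Choose `v ∈ W` of minimal block weight. On row vectors, a lower triangular Toeplitz matrix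
with first column `c` multiplies the reversal of the vector (read downwards from its last nonzero
entry) by the power series `c`; taking `c` to be the inverse of that reversal turns each nonzero
block of `v` into a unit vector, so the image of `v` has Hamming weight `wtBlk v`. The blocks
being invertible, every block weight is preserved, and Hamming weight dominates block weight. -/

open PowerSeries Matrix

theorem exists_ne_zero_forall_lt_eq_zero {ι M : Type*} [LinearOrder ι] [Fintype ι] [Zero M]
    {u : ι → M} (hu : u ≠ 0) : ∃ m, u m ≠ 0 ∧ ∀ a, m < a → u a = 0 := by
  classical
  obtain ⟨m, hm, hmax⟩ := (Finset.univ.filter (u · ≠ 0)).exists_max_image id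
    (by simpa [Finset.filter_nonempty_iff, Function.ne_iff] using hu)
  refine ⟨m, (Finset.mem_filter.mp hm).2, fun a hma => by_contra fun ha => ?_⟩
  exact (hmax a (by simpa using ha)).not_gt hma

section Toeplitz

variable {F : Type*} [Field F] {r : ℕ}

namespace IsUnitLTToeplitz

theorem det_ne_zero {S : Matrix (Fin r) (Fin r) F} (hS : IsUnitLTToeplitz S) : S.det ≠ 0 := by
  obtain ⟨c, hc0, hS⟩ := hS
  have hlower : S.IsLowerTriangular := fun a b hab => by
    rw [OrderDual.toDual_lt_toDual, Fin.lt_def] at hab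
    rw [hS, if_neg (by omega)]
  rw [Matrix.det_of_isLowerTriangular S hlower]
  exact Finset.prod_ne_zero_iff.mpr fun a _ => by simpa [hS] using hc0

theorem isUnit {S : Matrix (Fin r) (Fin r) F} (hS : IsUnitLTToeplitz S) : IsUnit S :=
  (S.isUnit_iff_isUnit_det).mpr hS.det_ne_zero.isUnit

end IsUnitLTToeplitz

noncomputable def toeplitz (r : ℕ) (c : F⟦X⟧) : Matrix (Fin r) (Fin r) F :=
  Matrix.of fun a b => if (b : ℕ) ≤ a then coeff ((a : ℕ) - b) c else 0

theorem isUnitLTToeplitz_toeplitz {c : F⟦X⟧} (hc : constantCoeff c ≠ 0) :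
    IsUnitLTToeplitz (toeplitz r c) :=
  ⟨fun k => coeff k c, by simpa using hc, fun _ _ => rfl⟩

-- Only the coefficients of index `≤ m` are meaningful: beyond, `m - i` truncates to `0`.
noncomputable def revSeries (u : Fin r → F) (m : Fin r) : F⟦X⟧ :=
  mk fun i => u ⟨m - i, lt_of_le_of_lt (Nat.sub_le _ _) m.isLt⟩

theorem constantCoeff_revSeries (u : Fin r → F) (m : Fin r) :
    constantCoeff (revSeries u m) = u m := by
  simp [revSeries, ← coeff_zero_eq_constantCoeff_apply]

theorem vecMul_toeplitz_apply_of_le {u : Fin r → F} {m b : Fin r}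
    (hu : ∀ a, m < a → u a = 0) (hbm : b ≤ m) (c : F⟦X⟧) :
    (u ᵥ* toeplitz r c) b = coeff ((m : ℕ) - b) (revSeries u m * c) := by
  have hsupp : (u ᵥ* toeplitz r c) b = ∑ a ∈ Finset.Icc b m, u a * coeff ((a : ℕ) - b) c := by
    rw [Matrix.vecMul, dotProduct, ← Finset.sum_subset (Finset.subset_univ _)]
    · refine Finset.sum_congr rfl fun a ha => ?_
      rw [Finset.mem_Icc] at ha
      simp [toeplitz, ha.1]
    · intro a _ ha
      rw [Finset.mem_Icc, not_and_or, not_le, not_le] at ha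
      rcases ha with ha | ha
      · simp [toeplitz, ha]
      · simp [hu a ha]
  rw [hsupp, coeff_mul]
  refine Finset.sum_nbij' (fun a => ((m : ℕ) - a, (a : ℕ) - b))
    (fun ij => ⟨m - ij.1, lt_of_le_of_lt (Nat.sub_le _ _) m.isLt⟩) ?_ ?_ ?_ ?_ ?_
  · intro a ha
    simp only [Finset.mem_Icc, Fin.le_def] at ha
    rw [Finset.HasAntidiagonal.mem_antidiagonal]
    omega
  · intro ij hij
    rw [Finset.HasAntidiagonal.mem_antidiagonal] at hij
    simp only [Finset.mem_Icc, Fin.le_def]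
    omega
  · intro a ha
    simp only [Finset.mem_Icc, Fin.le_def] at ha
    ext
    simp only
    omega
  · intro ij hij
    rw [Finset.HasAntidiagonal.mem_antidiagonal] at hij
    ext <;> simp only <;> omega
  · intro a ha
    simp only [Finset.mem_Icc, Fin.le_def] at ha
    have hm : (m : ℕ) - ((m : ℕ) - a) = a := by omega
    simp [revSeries, hm]

theorem vecMul_toeplitz_apply_of_lt {u : Fin r → F} {m b : Fin r}
    (hu : ∀ a, m < a → u a = 0) (hmb : m < b) (c : F⟦X⟧) : (u ᵥ* toeplitz r c) b = 0 := by
  rw [vecMul, dotProduct]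
  refine Finset.sum_eq_zero fun a _ => ?_
  by_cases hba : b ≤ a
  · simp [hu a (hmb.trans_le hba)]
  · simp [toeplitz, hba]

theorem exists_isUnitLTToeplitz_vecMul_eq_single {u : Fin r → F} (hu : u ≠ 0) :
    ∃ S, IsUnitLTToeplitz S ∧ ∃ m, u ᵥ* S = Pi.single m 1 := by
  obtain ⟨m, hm, hu⟩ := exists_ne_zero_forall_lt_eq_zero hu
  have hp : constantCoeff (revSeries u m) ≠ 0 := by rwa [constantCoeff_revSeries]
  refine ⟨toeplitz r (revSeries u m)⁻¹, isUnitLTToeplitz_toeplitz ?_, m, funext fun b => ?_⟩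
  · simpa using hp
  rcases le_or_gt b m with hbm | hmb
  · rw [vecMul_toeplitz_apply_of_le hu hbm, PowerSeries.mul_inv_cancel _ hp, coeff_one,
      Pi.single_apply]
    simp only [← Fin.val_inj]
    rw [Fin.le_def] at hbm
    split_ifs <;> first | rfl | omega
  · rw [vecMul_toeplitz_apply_of_lt hu hmb, Pi.single_eq_of_ne hmb.ne']

theorem exists_isUnitLTToeplitz_card_vecMul_ne_zero_le_one (u : Fin r → F) :
    ∃ S, IsUnitLTToeplitz S ∧ Nat.card {j // (u ᵥ* S) j ≠ 0} ≤ 1 := by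
  rcases eq_or_ne u 0 with rfl | hu
  · refine ⟨toeplitz r 1, isUnitLTToeplitz_toeplitz (by simp), ?_⟩
    simp
  · obtain ⟨S, hS, m, hSm⟩ := exists_isUnitLTToeplitz_vecMul_eq_single hu
    refine ⟨S, hS, Finite.card_le_one_iff_subsingleton.mpr ⟨fun x y => ?_⟩⟩
    have hsingle : ∀ j, (u ᵥ* S) j ≠ 0 → j = m := fun j hj => by
      by_contra hjm
      rw [hSm, Pi.single_eq_of_ne hjm] at hj
      exact hj rfl
    exact Subtype.ext ((hsingle x x.2).trans (hsingle y y.2).symm)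

end Toeplitz

section Weight

theorem card_subtype_ne_zero_eq_zero_iff {ι : Type*} [Finite ι] {M : ι → Type*} [∀ i, Zero (M i)]
    (w : ∀ i, M i) : Nat.card {i // w i ≠ 0} = 0 ↔ w = 0 := by
  rw [Finite.card_eq_zero_iff, isEmpty_subtype, funext_iff]
  simp

variable {F : Type*} [Field F] {s : ℕ} {n : Fin s → ℕ}

theorem wtBlk_eq_zero_iff {v : ∀ i, Fin (n i) → F} : wtBlk v = 0 ↔ v = 0 :=
  card_subtype_ne_zero_eq_zero_iff v

open scoped Classical in
theorem wtBlk_eq_sum (v : ∀ i, Fin (n i) → F) : wtBlk v = ∑ i, if v i = 0 then 0 else 1 := by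
  rw [wtBlk, Nat.card_eq_fintype_card, Fintype.card_subtype, Finset.card_filter]
  simp only [ite_not]

theorem wtBlk_le_wtHam (v : ∀ i, Fin (n i) → F) : wtBlk v ≤ wtHam v := by
  rw [wtBlk_eq_sum, wtHam]
  refine Finset.sum_le_sum fun i _ => ?_
  split_ifs with hv
  · exact Nat.zero_le _
  · exact Nat.one_le_iff_ne_zero.mpr ((card_subtype_ne_zero_eq_zero_iff (v i)).not.mpr hv)

theorem wtHam_eq_wtBlk_of_card_le_one {v : ∀ i, Fin (n i) → F}
    (hv : ∀ i, Nat.card {j // v i j ≠ 0} ≤ 1) : wtHam v = wtBlk v := by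
  rw [wtBlk_eq_sum, wtHam]
  refine Finset.sum_congr rfl fun i _ => ?_
  split_ifs with hvi
  · exact (card_subtype_ne_zero_eq_zero_iff (v i)).mpr hvi
  · have := (card_subtype_ne_zero_eq_zero_iff (v i)).not.mpr hvi
    have := hv i
    omega

theorem wtBlk_vecMul_of_isUnit {S : ∀ i, Matrix (Fin (n i)) (Fin (n i)) F}
    (hS : ∀ i, IsUnit (S i)) (v : ∀ i, Fin (n i) → F) :
    wtBlk (fun i => v i ᵥ* S i) = wtBlk v := by
  simp only [wtBlk, ne_eq, fun i => (Matrix.vecMul_injective_of_isUnit (hS i)).eq_iff'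
    (Matrix.zero_vecMul (S i))]

end Weight

theorem exists_toeplitz_achieving_block_distance_general
    {F : Type*} [Field F]
    {s : ℕ} (n : Fin s → ℕ)
    (W : Submodule F (∀ i, Fin (n i) → F)) (hW : ∃ v ∈ W, v ≠ 0) :
    ∃ S : ∀ i, Matrix (Fin (n i)) (Fin (n i)) F,
      (∀ i, IsUnitLTToeplitz (S i)) ∧
      sInf {w : ℕ | ∃ v ∈ W.map
            (LinearMap.pi fun i => (Matrix.vecMulLinear (S i)).comp (LinearMap.proj i)),
          v ≠ 0 ∧ wtHam v = w}
        = sInf {w : ℕ | ∃ v ∈ W, v ≠ 0 ∧ wtBlk v = w} := by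
  obtain ⟨v₀, hv₀W, hv₀⟩ := hW
  obtain ⟨v, hvW, hv0, hv⟩ := Nat.sInf_mem (s := {w : ℕ | ∃ v ∈ W, v ≠ 0 ∧ wtBlk v = w})
    ⟨_, v₀, hv₀W, hv₀, rfl⟩
  choose S hS hcard using fun i => exists_isUnitLTToeplitz_card_vecMul_ne_zero_le_one (v i)
  set T := LinearMap.pi fun i => (Matrix.vecMulLinear (S i)).comp (LinearMap.proj i)
  have hwt (u : ∀ i, Fin (n i) → F) : wtBlk (T u) = wtBlk u :=
    wtBlk_vecMul_of_isUnit (fun i => (hS i).isUnit) u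
  have hT_eq_zero (u : ∀ i, Fin (n i) → F) : T u = 0 ↔ u = 0 := by
    rw [← wtBlk_eq_zero_iff, hwt, wtBlk_eq_zero_iff]
  refine ⟨S, hS, hv ▸ IsLeast.csInf_eq ⟨⟨_, Submodule.mem_map_of_mem hvW,
    (hT_eq_zero v).not.mpr hv0, (wtHam_eq_wtBlk_of_card_le_one hcard).trans (hwt v)⟩, ?_⟩⟩
  rintro _ ⟨_, ⟨u, huW, rfl⟩, hu0, rfl⟩
  calc wtBlk v = sInf {w : ℕ | ∃ v ∈ W, v ≠ 0 ∧ wtBlk v = w} := hv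
    _ ≤ wtBlk u := Nat.sInf_le ⟨u, huW, (hT_eq_zero u).not.mp hu0, rfl⟩
    _ = wtBlk (T u) := (hwt u).symm
    _ ≤ wtHam (T u) := wtBlk_le_wtHam _

/-- For every linear subspace `W ⊆ ∏_i F^{n_i}` containing a nonzero
vector, there exist unit lower triangular Toeplitz matrices `S_i ∈ M_{n_i×n_i}(F)` such
that the image `W' = { (v_1 S_1, …, v_s S_s) : v ∈ W }` has minimum Hamming weight (over
nonzero elements) equal to the minimum block weight `d_blk(W)` of `W`. -/
theorem exists_toeplitz_achieving_block_distance
    {F : Type*} [Field F] [Fintype F]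
    {s : ℕ} (hs : 1 ≤ s) (n : Fin s → ℕ) (hn : ∀ i, 1 ≤ n i)
    (W : Submodule F (∀ i, Fin (n i) → F)) (hW : ∃ v ∈ W, v ≠ 0) :
    ∃ S : ∀ i, Matrix (Fin (n i)) (Fin (n i)) F,
      (∀ i, IsUnitLTToeplitz (S i)) ∧
      sInf {w : ℕ | ∃ v ∈ W.map
            (LinearMap.pi fun i => (Matrix.vecMulLinear (S i)).comp (LinearMap.proj i)),
          v ≠ 0 ∧ wtHam v = w}
        = sInf {w : ℕ | ∃ v ∈ W, v ≠ 0 ∧ wtBlk v = w} :=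
  exists_toeplitz_achieving_block_distance_general n W hW
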